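/- Let p ∈ ℝⁿ and let S ⊂ ℝⁿ be closed, and suppose there are two distinct points q₁ ≠ q₂ ∈ S satisfying |p − q₁| = |p − q₂| = d(p, S) > 0. Then the function x ↦ d(x, S) is not differentiable at p. -/
import Mathlib

open Metric

lemma aux_dirderiv (n : ℕ) (p : EuclideanSpace ℝ (Fin n))
    (S : Set (EuclideanSpace ℝ (Fin n))) (q : EuclideanSpace ℝ (Fin n)) (hq : q ∈ S)
    (h₁ : dist p q = Metric.infDist p S)
    (hd : DifferentiableAt ℝ (fun x => Metric.infDist x S) p) :
    fderiv ℝ (fun x => Metric.infDist x S) p (q - p) = -Metric.infDist p S := by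
  set u : EuclideanSpace ℝ (Fin n) → ℝ := fun x => Metric.infDist x S with hu
  set v := q - p with hv
  set d := Metric.infDist p S with hdd
  set L := fderiv ℝ u p with hL
  have hS : S.Nonempty := ⟨q, hq⟩
  have hnv : ‖v‖ = d := by
    rw [hv, ← h₁, dist_eq_norm, norm_sub_rev]
  -- the curve t ↦ p + t • v
  have hc : ∀ t : ℝ, HasDerivAt (fun t : ℝ => p + t • v) v t := by
    intro t
    simpa using ((hasDerivAt_id t).smul_const v).const_add p
  have hg : HasDerivAt (fun t : ℝ => u (p + t • v)) (L v) 0 := by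
    have hF : HasFDerivAt u L (p + (0:ℝ) • v) := by simpa using hd.hasFDerivAt
    exact hF.comp_hasDerivAt 0 (hc 0)
  -- on [0,1], u (p + t • v) = d - t * d
  have key : ∀ t ∈ Set.Icc (0:ℝ) 1, u (p + t • v) = d - t * d := by
    intro t ht
    have hub : u (p + t • v) ≤ d - t * d := by
      have h1 : u (p + t • v) ≤ dist (p + t • v) q := Metric.infDist_le_dist_of_mem hq
      have h2 : dist (p + t • v) q = (1 - t) * ‖v‖ := by
        have : p + t • v - q = -((1 - t) • v) := by
          rw [hv]; module
        rw [dist_eq_norm, this, norm_neg, norm_smul, Real.norm_eq_abs,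
          abs_of_nonneg (by linarith [ht.2])]
      rw [h2, hnv] at h1; linarith
    have hlb : d - t * d ≤ u (p + t • v) := by
      have h1 : d ≤ u (p + t • v) + dist p (p + t • v) :=
        Metric.infDist_le_infDist_add_dist
      have h2 : dist p (p + t • v) = t * d := by
        rw [dist_eq_norm]
        have : p - (p + t • v) = -(t • v) := by module
        rw [this, norm_neg, norm_smul, Real.norm_eq_abs, abs_of_nonneg ht.1, hnv]
      linarith
    linarith
  -- derivative within Ici 0 of g equals both L v and -d
  have h1 : HasDerivWithinAt (fun t : ℝ => u (p + t • v)) (L v) (Set.Ici 0) 0 :=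
    hg.hasDerivWithinAt
  have h2 : HasDerivWithinAt (fun t : ℝ => u (p + t • v)) (-d) (Set.Ici 0) 0 := by
    have hlin : HasDerivWithinAt (fun t : ℝ => d - t * d) (-d) (Set.Ici 0) 0 := by
      have : HasDerivAt (fun t : ℝ => d - t * d) (-d) 0 := by
        simpa using ((hasDerivAt_id (0:ℝ)).mul_const d).const_sub d
      exact this.hasDerivWithinAt
    refine hlin.congr_of_eventuallyEq ?_ (by simpa using key 0 (by norm_num))
    filter_upwards [Icc_mem_nhdsGE_of_mem (by norm_num : (0:ℝ) ∈ Set.Ico (0:ℝ) 1)] with t ht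
    exact key t ht
  have hu1 := h1.derivWithin (uniqueDiffOn_Ici 0 0 Set.self_mem_Ici)
  have hu2 := h2.derivWithin (uniqueDiffOn_Ici 0 0 Set.self_mem_Ici)
  rw [← hu1, hu2]

theorem stmt_17 (n : ℕ) (p : EuclideanSpace ℝ (Fin n))
    (S : Set (EuclideanSpace ℝ (Fin n))) (hS : IsClosed S)
    (q₁ q₂ : EuclideanSpace ℝ (Fin n)) (hq₁ : q₁ ∈ S) (hq₂ : q₂ ∈ S)
    (hne : q₁ ≠ q₂)
    (h₁ : dist p q₁ = Metric.infDist p S) (h₂ : dist p q₂ = Metric.infDist p S)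
    (hpos : 0 < Metric.infDist p S) :
    ¬ DifferentiableAt ℝ (fun x => Metric.infDist x S) p := by
  intro hd
  set d := Metric.infDist p S with hdd
  set L := fderiv ℝ (fun x => Metric.infDist x S) p with hL
  have e1 := aux_dirderiv n p S q₁ hq₁ h₁ hd
  have e2 := aux_dirderiv n p S q₂ hq₂ h₂ hd
  have hsum : L ((q₁ - p) + (q₂ - p)) = -(2 * d) := by
    rw [map_add, e1, e2]; ring
  have hLnorm : ‖L‖ ≤ 1 := by
    have := norm_fderiv_le_of_lipschitz ℝ (lipschitz_infDist_pt S) (x₀ := p)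
    simpa using this
  have hn1 : ‖q₁ - p‖ = d := by rw [← h₁, dist_eq_norm, norm_sub_rev]
  have hn2 : ‖q₂ - p‖ = d := by rw [← h₂, dist_eq_norm, norm_sub_rev]
  have hb : 2 * d ≤ ‖(q₁ - p) + (q₂ - p)‖ := by
    have := L.le_opNorm ((q₁ - p) + (q₂ - p))
    rw [hsum] at this
    have h2 : ‖L‖ * ‖q₁ - p + (q₂ - p)‖ ≤ ‖q₁ - p + (q₂ - p)‖ := by
      have := mul_le_mul_of_nonneg_right hLnorm (norm_nonneg (q₁ - p + (q₂ - p)))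
      simpa using this
    calc 2 * d = ‖-(2*d)‖ := by rw [norm_neg, Real.norm_eq_abs, abs_of_nonneg (by positivity)]
    _ ≤ ‖L‖ * ‖q₁ - p + (q₂ - p)‖ := this
    _ ≤ _ := h2
  have heq : ‖(q₁ - p) + (q₂ - p)‖ = ‖q₁ - p‖ + ‖q₂ - p‖ := by
    refine le_antisymm (norm_add_le _ _) ?_
    rw [hn1, hn2]; linarith
  have := eq_of_norm_eq_of_norm_add_eq (hn1.trans hn2.symm) heq
  exact hne (sub_left_injective this)
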